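/- arXiv:2402.13344 — 4 statements merged into one kernel-verified Lean document; each statement's English description precedes it below -/
import Mathlib

section
/- Let M₀, M₁ be structures in the same vocabulary, κ = |M₀^θ ∪ M₁^θ|, and α < κ⁺. If Eve has a winning strategy in DG^β_{θ,α}(M₀,M₁) for all β < κ⁺, then Eve has a winning strategy in the infinite game DG_{θ,α}(M₀,M₁). -/
open Cardinal Set FirstOrder FirstOrder.Language

universe u

namespace DGPaper

variable (L : FirstOrder.Language.{u, u})

/-- A partial isomorphism between two `L`-structures, given as the graph of a partial map.
It is functional, injective, preserves all relations (of positive arity) in both directions,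
and is compatible with the interpretations of all function symbols (including constants). -/
def IsPartialIso (M N : Type u) [L.Structure M] [L.Structure N] (g : Set (M × N)) : Prop :=
  (∀ ⦃a : M⦄ ⦃b b' : N⦄, (a, b) ∈ g → (a, b') ∈ g → b = b') ∧
  (∀ ⦃a a' : M⦄ ⦃b : N⦄, (a, b) ∈ g → (a', b) ∈ g → a = a') ∧
  (∀ (n : ℕ) (R : L.Relations (n + 1)) (x : Fin (n + 1) → M) (y : Fin (n + 1) → N),
      (∀ i, (x i, y i) ∈ g) →
        (Structure.RelMap R x ↔ Structure.RelMap R y)) ∧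
  (∀ (n : ℕ) (f : L.Functions n) (x : Fin n → M) (y : Fin n → N),
      (∀ i, (x i, y i) ∈ g) →
        (∀ b : N, (Structure.funMap f x, b) ∈ g → b = Structure.funMap f y) ∧
        (∀ a : M, (a, Structure.funMap f y) ∈ g → a = Structure.funMap f x))

/-- A `(θ, α)`-position in the similarity game on `(M, N)`:  a clock ordinal `ht`, sets
`A0 ⊆ M`, `A1 ⊆ N` of cardinality `≤ θ`, a partial isomorphism `g` between them, and
height functions `h0`, `h1` taking values `< α` on `A0`, `A1`, such that every element of
height `0` is matched by `g`. -/
structure Position (M N : Type u) [L.Structure M] [L.Structure N]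
    (θ : Cardinal.{u}) (α : Ordinal.{u}) : Type (u + 1) where
  ht : Ordinal.{u}
  A0 : Set M
  A1 : Set N
  A0_card : #A0 ≤ θ
  A1_card : #A1 ≤ θ
  g : Set (M × N)
  g_iso : IsPartialIso L M N g
  g_sub : g ⊆ A0 ×ˢ A1
  h0 : M → Ordinal.{u}
  h1 : N → Ordinal.{u}
  h0_lt : ∀ a ∈ A0, h0 a < α
  h1_lt : ∀ b ∈ A1, h1 b < α
  h0_zero : ∀ a ∈ A0, h0 a = 0 → ∃ b, (a, b) ∈ g
  h1_zero : ∀ b ∈ A1, h1 b = 0 → ∃ a, (a, b) ∈ g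

variable {M N : Type u} [L.Structure M] [L.Structure N] {θ : Cardinal.{u}} {α : Ordinal.{u}}

/-- `q` extends `p` (written `q < p` in the paper): the clock strictly decreases, the sets
grow, the partial isomorphism of `q` restricted to the old sets is that of `p`, and every
height strictly decreases unless it is already `0`. -/
def Extends (q p : Position L M N θ α) : Prop :=
  q.ht < p.ht ∧ p.A0 ⊆ q.A0 ∧ p.A1 ⊆ q.A1 ∧
  p.g ⊆ q.g ∧ (∀ a b, (a, b) ∈ q.g → a ∈ p.A0 → (a, b) ∈ p.g) ∧
  (∀ a ∈ p.A0, q.h0 a ≤ p.h0 a ∧ (p.h0 a ≠ 0 → q.h0 a < p.h0 a)) ∧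
  (∀ b ∈ p.A1, q.h1 b ≤ p.h1 b ∧ (p.h1 b ≠ 0 → q.h1 b < p.h1 b))

/-- The starting position `(β, ∅, ∅, ∅, ∅)`. -/
def startPos (β : Ordinal.{u}) : Position L M N θ α where
  ht := β
  A0 := ∅
  A1 := ∅
  A0_card := by simp
  A1_card := by simp
  g := ∅
  g_iso := by
    refine ⟨?_, ?_, ?_, ?_⟩ <;> intros <;> simp_all
  g_sub := by simp
  h0 := fun _ => 0
  h1 := fun _ => 0
  h0_lt := by simp
  h1_lt := by simp
  h0_zero := by simp
  h1_zero := by simp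

/-- Eve has a winning strategy in the similarity game from position `p`:  whatever clock
ordinal `β' < ht p` and sets `B0`, `B1` of size `≤ θ` Adam demands, Eve can move to an
extending position covering them from which she again has a winning strategy.  (Since the
clock strictly decreases, the game is finite, and this well-founded recursion captures
exactly the existence of a winning strategy for Eve.) -/
noncomputable def EveWinsFrom (θ : Cardinal.{u}) (α : Ordinal.{u})
    (p : Position L M N θ α) : Prop :=
  WellFounded.fix (C := fun _ : Ordinal.{u} => Position L M N θ α → Prop) Ordinal.lt_wf
    (fun o IH p =>
      ∀ β' (hβ : β' < o) (B0 : Set M) (B1 : Set N), #B0 ≤ θ → #B1 ≤ θ →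
        ∃ q : Position L M N θ α, Extends L q p ∧ q.ht = β' ∧
          B0 ⊆ q.A0 ∧ B1 ⊆ q.A1 ∧ IH β' hβ q)
    p.ht p

/-- Eve has a winning strategy in the game `DG^β_{θ,α}(M, N)`. -/
noncomputable def EveWinsGame (M N : Type u) [L.Structure M] [L.Structure N]
    (β : Ordinal.{u}) (θ : Cardinal.{u}) (α : Ordinal.{u}) : Prop :=
  EveWinsFrom L θ α (startPos L (M := M) (N := N) β)

/-- Adam has a winning strategy from position `p`: he can demand a clock ordinal
`β' < ht p` and sets `B0`, `B1` of size `≤ θ` such that every legal reply of Eve leads to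
a position from which Adam again has a winning strategy (in particular, if Eve has no
legal reply, she loses). -/
inductive AdamWinsFrom (θ : Cardinal.{u}) (α : Ordinal.{u}) :
    Position L M N θ α → Prop where
  | step (p : Position L M N θ α) (β' : Ordinal.{u}) (hβ : β' < p.ht)
      (B0 : Set M) (B1 : Set N) (hB0 : #B0 ≤ θ) (hB1 : #B1 ≤ θ)
      (h : ∀ q : Position L M N θ α, Extends L q p → q.ht = β' →
        B0 ⊆ q.A0 → B1 ⊆ q.A1 → AdamWinsFrom θ α q) :
      AdamWinsFrom θ α p

/-- Adam has a winning strategy in the game `DG^β_{θ,α}(M, N)`. -/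
def AdamWinsGame (M N : Type u) [L.Structure M] [L.Structure N]
    (β : Ordinal.{u}) (θ : Cardinal.{u}) (α : Ordinal.{u}) : Prop :=
  AdamWinsFrom L θ α (startPos L (M := M) (N := N) β)

/-- A position of the infinite game `DG_{θ,α}(M,N)` (no clock ordinal). -/
structure IPosition (M N : Type u) [L.Structure M] [L.Structure N]
    (θ : Cardinal.{u}) (α : Ordinal.{u}) : Type (u + 1) where
  A0 : Set M
  A1 : Set N
  A0_card : #A0 ≤ θ
  A1_card : #A1 ≤ θ
  g : Set (M × N)
  g_iso : IsPartialIso L M N g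
  g_sub : g ⊆ A0 ×ˢ A1
  h0 : M → Ordinal.{u}
  h1 : N → Ordinal.{u}
  h0_lt : ∀ a ∈ A0, h0 a < α
  h1_lt : ∀ b ∈ A1, h1 b < α
  h0_zero : ∀ a ∈ A0, h0 a = 0 → ∃ b, (a, b) ∈ g
  h1_zero : ∀ b ∈ A1, h1 b = 0 → ∃ a, (a, b) ∈ g

/-- Extension of positions in the infinite game. -/
def IExtends (q p : IPosition L M N θ α) : Prop :=
  p.A0 ⊆ q.A0 ∧ p.A1 ⊆ q.A1 ∧
  p.g ⊆ q.g ∧ (∀ a b, (a, b) ∈ q.g → a ∈ p.A0 → (a, b) ∈ p.g) ∧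
  (∀ a ∈ p.A0, q.h0 a ≤ p.h0 a ∧ (p.h0 a ≠ 0 → q.h0 a < p.h0 a)) ∧
  (∀ b ∈ p.A1, q.h1 b ≤ p.h1 b ∧ (p.h1 b ≠ 0 → q.h1 b < p.h1 b))

/-- The empty starting position of the infinite game. -/
def startIPos : IPosition L M N θ α where
  A0 := ∅
  A1 := ∅
  A0_card := by simp
  A1_card := by simp
  g := ∅
  g_iso := by
    refine ⟨?_, ?_, ?_, ?_⟩ <;> intros <;> simp_all
  g_sub := by simp
  h0 := fun _ => 0
  h1 := fun _ => 0
  h0_lt := by simp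
  h1_lt := by simp
  h0_zero := by simp
  h1_zero := by simp

/-- Eve has a winning strategy in the infinite game `DG_{θ,α}(M, N)` of length `ω`.
Since this game is closed for Eve, having a winning strategy is equivalent to having a
positional one, i.e. a set `K` of positions containing the starting position such that Eve
can answer any challenge of Adam while staying inside `K`. -/
def EveWinsInfGame (M N : Type u) [L.Structure M] [L.Structure N]
    (θ : Cardinal.{u}) (α : Ordinal.{u}) : Prop :=
  ∃ K : Set (IPosition L M N θ α), startIPos L ∈ K ∧
    ∀ p ∈ K, ∀ (B0 : Set M) (B1 : Set N), #B0 ≤ θ → #B1 ≤ θ →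
      ∃ q ∈ K, IExtends L q p ∧ B0 ⊆ q.A0 ∧ B1 ⊆ q.A1

end DGPaper

/-!
If `κ` is infinite, Eve's positional strategy consists of the clock-free positions `r` which,
for every clock `β < κ⁺`, underlie a position with clock `β` from which she wins. Against a
challenge at `r` she answers from the copy of `r` with clock `β + 1`, for every `β < κ⁺`. These
answers have at most `κ ^ θ = κ` different clock-free parts, so by regularity of `κ⁺` one of
them occurs for cofinally many `β`; since Eve may always lower the clock, it lies in the
strategy again.

If `κ` is finite, so is every clock. Then each structure has at most `θ` elements (for finite
`θ ≥ 1`, Adam would otherwise win with clock `2`), so Adam can demand both structures whole in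
every move; after `κ` moves all heights, being `< α ≤ κ`, have dropped to `0`, and Eve can
repeat the resulting position forever.
-/

namespace Cardinal

theorem power_power_self_of_aleph0_le {x c : Cardinal.{u}} (h : ℵ₀ ≤ x ^ c) :
    (x ^ c) ^ c = x ^ c := by
  rw [← power_mul]
  rcases lt_or_ge c ℵ₀ with hc | hc
  · obtain ⟨n, rfl⟩ := lt_aleph0.1 hc
    have hn : 1 ≤ n := by
      rw [Nat.one_le_iff_ne_zero]
      rintro rfl
      exact one_lt_aleph0.not_ge (by simpa using h)
    have hx : ℵ₀ ≤ x := by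
      by_contra! hx
      exact (power_lt_aleph0 hx hc).not_ge h
    rw [← Nat.cast_mul, power_natCast, power_natCast, power_nat_eq hx (one_le_mul hn hn),
      power_nat_eq hx hn]
  · rw [mul_eq_self hc]

theorem power_add_power_power_of_aleph0_le {a b c : Cardinal.{u}} (h : ℵ₀ ≤ a ^ c + b ^ c) :
    (a ^ c + b ^ c) ^ c = a ^ c + b ^ c := by
  wlog hab : a ≤ b generalizing a b
  · rw [add_comm] at h ⊢
    exact this h (le_of_not_ge hab)
  have hle : a ^ c ≤ b ^ c := power_le_power_right hab
  have hb : ℵ₀ ≤ b ^ c := by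
    by_contra! hb
    exact (add_lt_aleph0 (hle.trans_lt hb) hb).not_ge h
  rw [add_eq_right hb hle, power_power_self_of_aleph0_le hb]

theorem mk_le_of_forall_mk_insert_le {X : Type u} {θ : Cardinal.{u}} {A : Set X}
    (hθ : θ < ℵ₀) (hA : min θ #X ≤ #A) (h : ∀ x, #(insert x A : Set X) ≤ θ) : #X ≤ θ := by
  by_contra! hX
  have hθA : θ ≤ #A := min_eq_left hX.le ▸ hA
  obtain ⟨x₀⟩ : Nonempty X := mk_ne_zero_iff.1 (zero_le.trans_lt hX).ne'
  have hAθ : #A ≤ θ := (mk_le_mk_of_subset (subset_insert x₀ A)).trans (h x₀)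
  obtain ⟨n, hn⟩ := lt_aleph0.1 (hAθ.trans_lt hθ)
  have hmem : ∀ x, x ∈ A := fun x => by
    by_contra hx
    have := (h x).trans hθA
    rw [mk_insert hx, hn] at this
    exact_mod_cast (Nat.lt_succ_self n).not_ge (by exact_mod_cast this)
  exact hX.not_ge ((mk_univ.symm.trans_le (mk_le_mk_of_subset fun x _ => hmem x)).trans hAθ)

end Cardinal

theorem Ordinal.exists_unbounded_fiber_of_mk_lt_cof {ι : Type u} {a : Ordinal.{u}}
    (hι : #ι < a.cof) (c : Set.Iio a → ι) : ∃ i, ∀ γ < a, ∃ δ : Set.Iio a, γ ≤ δ ∧ c δ = i := by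
  by_contra! h
  choose G hGa hG using h
  have hs : ⨆ i, G i < a := Ordinal.iSup_lt_of_lt_cof hι hGa
  exact hG (c ⟨_, hs⟩) ⟨_, hs⟩ (Ordinal.le_iSup G _) rfl

theorem Ordinal.le_of_le_add_one_of_decrease {x y o : Ordinal.{u}} (hxy : x ≤ y)
    (hlt : y ≠ 0 → x < y) (hy : y ≤ o + 1) : x ≤ o := by
  rcases eq_or_ne y 0 with rfl | hy0
  · exact hxy.trans zero_le
  · exact Order.lt_add_one_iff.1 ((hlt hy0).trans_le hy)

namespace DGPaper

variable {L : FirstOrder.Language.{u, u}} {M N : Type u} [L.Structure M] [L.Structure N]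
  {θ : Cardinal.{u}} {α : Ordinal.{u}}

theorem eveWinsFrom_iff (p : Position L M N θ α) :
    EveWinsFrom L θ α p ↔ ∀ β < p.ht, ∀ (B0 : Set M) (B1 : Set N), #B0 ≤ θ → #B1 ≤ θ →
      ∃ q : Position L M N θ α, Extends L q p ∧ q.ht = β ∧ B0 ⊆ q.A0 ∧ B1 ⊆ q.A1 ∧
        EveWinsFrom L θ α q := by
  unfold EveWinsFrom
  rw [WellFounded.fix_eq]
  refine forall₂_congr fun β _ => forall₄_congr fun _ _ _ _ => exists_congr fun q => ?_
  refine and_congr_right' (and_congr_right fun hq => ?_)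
  rw [hq]

def Position.withHt (p : Position L M N θ α) (β : Ordinal.{u}) : Position L M N θ α :=
  { p with ht := β }

theorem EveWinsFrom.withHt {p : Position L M N θ α} (hw : EveWinsFrom L θ α p)
    {β : Ordinal.{u}} (hβ : β ≤ p.ht) : EveWinsFrom L θ α (p.withHt β) := by
  rw [eveWinsFrom_iff] at hw ⊢
  intro β' hβ' B0 B1 hB0 hB1
  obtain ⟨q, hext, hq⟩ := hw β' (hβ'.trans_le hβ) B0 B1 hB0 hB1
  exact ⟨q, ⟨hq.1 ▸ hβ', hext.2⟩, hq⟩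

theorem EveWinsFrom.mk_union_le {p : Position L M N θ α} (hw : EveWinsFrom L θ α p)
    (hp : 0 < p.ht) {B0 : Set M} {B1 : Set N} (hB0 : #B0 ≤ θ) (hB1 : #B1 ≤ θ) :
    #(p.A0 ∪ B0 : Set M) ≤ θ ∧ #(p.A1 ∪ B1 : Set N) ≤ θ := by
  obtain ⟨q, ⟨-, hA0, hA1, -⟩, -, hq0, hq1, -⟩ := (eveWinsFrom_iff p).1 hw 0 hp B0 B1 hB0 hB1
  exact ⟨(mk_le_mk_of_subset (union_subset hA0 hq0)).trans q.A0_card,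
    (mk_le_mk_of_subset (union_subset hA1 hq1)).trans q.A1_card⟩

/-- With clock at least `2` and finite `θ`, Adam first demands `θ` elements of a structure
and then one more. -/
theorem EveWinsFrom.mk_le {p : Position L M N θ α} (hw : EveWinsFrom L θ α p)
    (hp : 1 < p.ht) (hθ1 : 1 ≤ θ) (hθ : θ < ℵ₀) : #M ≤ θ ∧ #N ≤ θ := by
  obtain ⟨S0, hS0⟩ := le_mk_iff_exists_set.1 (min_le_right θ #M)
  obtain ⟨S1, hS1⟩ := le_mk_iff_exists_set.1 (min_le_right θ #N)
  obtain ⟨q, -, hqht, hS0q, hS1q, hqw⟩ :=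
    (eveWinsFrom_iff p).1 hw 1 hp S0 S1 (hS0 ▸ min_le_left _ _) (hS1 ▸ min_le_left _ _)
  have hq : 0 < q.ht := hqht ▸ zero_lt_one
  refine ⟨mk_le_of_forall_mk_insert_le hθ (hS0 ▸ mk_le_mk_of_subset hS0q) fun x => ?_,
    mk_le_of_forall_mk_insert_le hθ (hS1 ▸ mk_le_mk_of_subset hS1q) fun y => ?_⟩
  · rw [← union_singleton]
    exact (hqw.mk_union_le hq (B0 := {x}) (B1 := ∅) (by simpa using hθ1) (by simp)).1
  · rw [← union_singleton]
    exact (hqw.mk_union_le hq (B0 := ∅) (B1 := {y}) (by simp) (by simpa using hθ1)).2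

/-- Adam demands both whole structures in every move: each move lowers every nonzero height. -/
theorem exists_heights_eq_zero_of_eveWinsFrom (hM : #M ≤ θ) (hN : #N ≤ θ) (k : ℕ)
    (p : Position L M N θ α) (hw : EveWinsFrom L θ α p) (hht : p.ht = k)
    (hA0 : Set.univ ⊆ p.A0) (hA1 : Set.univ ⊆ p.A1) (hh0 : ∀ a, p.h0 a ≤ k)
    (hh1 : ∀ b, p.h1 b ≤ k) :
    ∃ q : Position L M N θ α, Set.univ ⊆ q.A0 ∧ Set.univ ⊆ q.A1 ∧ (∀ a, q.h0 a = 0) ∧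
      ∀ b, q.h1 b = 0 := by
  induction k generalizing p with
  | zero =>
    exact ⟨p, hA0, hA1, fun a => nonpos_iff_eq_zero.1 (by simpa using hh0 a),
      fun b => nonpos_iff_eq_zero.1 (by simpa using hh1 b)⟩
  | succ k ih =>
    obtain ⟨q, ⟨-, -, -, -, -, hdec0, hdec1⟩, hqht, hq0, hq1, hqw⟩ :=
      (eveWinsFrom_iff p).1 hw k (by rw [hht]; exact_mod_cast k.lt_succ_self) univ univ
        (mk_univ.trans_le hM) (mk_univ.trans_le hN)
    refine ih q hqw hqht hq0 hq1 (fun a => ?_) (fun b => ?_)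
    · obtain ⟨hle, hlt⟩ := hdec0 a (hA0 trivial)
      exact Ordinal.le_of_le_add_one_of_decrease hle hlt (by exact_mod_cast hh0 a)
    · obtain ⟨hle, hlt⟩ := hdec1 b (hA1 trivial)
      exact Ordinal.le_of_le_add_one_of_decrease hle hlt (by exact_mod_cast hh1 b)

theorem iExtends_startIPos (r : IPosition L M N θ α) : IExtends L r (startIPos L) :=
  ⟨empty_subset _, empty_subset _, empty_subset _, fun _ _ _ h => h.elim, fun _ h => h.elim,
    fun _ h => h.elim⟩

theorem eveWinsInfGame_of_absorbing (r : IPosition L M N θ α)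
    (hh0 : ∀ a ∈ r.A0, r.h0 a = 0) (hh1 : ∀ b ∈ r.A1, r.h1 b = 0)
    (hB0 : ∀ B : Set M, #B ≤ θ → B ⊆ r.A0) (hB1 : ∀ B : Set N, #B ≤ θ → B ⊆ r.A1) :
    EveWinsInfGame L M N θ α := by
  have hself : IExtends L r r := ⟨subset_rfl, subset_rfl, subset_rfl, fun _ _ h _ => h,
    fun a ha => ⟨le_rfl, fun h => (h (hh0 a ha)).elim⟩,
    fun b hb => ⟨le_rfl, fun h => (h (hh1 b hb)).elim⟩⟩
  refine ⟨{startIPos L, r}, mem_insert _ _, fun p hp B0 B1 h0 h1 =>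
    ⟨r, mem_insert_of_mem _ rfl, ?_, hB0 B0 h0, hB1 B1 h1⟩⟩
  rcases hp with rfl | rfl
  · exact iExtends_startIPos r
  · exact hself

theorem eveWinsInfGame_of_forall_eq_empty (h0 : ∀ B : Set M, #B ≤ θ → B = ∅)
    (h1 : ∀ B : Set N, #B ≤ θ → B = ∅) : EveWinsInfGame L M N θ α :=
  eveWinsInfGame_of_absorbing (startIPos L) (fun _ _ => rfl) (fun _ _ => rfl)
    (fun B hB => (h0 B hB).subset) (fun B hB => (h1 B hB).subset)

def Position.toIPosition (p : Position L M N θ α) : IPosition L M N θ α :=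
  ⟨p.A0, p.A1, p.A0_card, p.A1_card, p.g, p.g_iso, p.g_sub, p.h0, p.h1, p.h0_lt, p.h1_lt,
    p.h0_zero, p.h1_zero⟩

theorem eveWinsInfGame_of_mk_le (hM : #M ≤ θ) (hN : #N ≤ θ) (k : ℕ) (hα : α ≤ k + 1)
    (hw : EveWinsGame L M N (k + 1) θ α) : EveWinsInfGame L M N θ α := by
  obtain ⟨p, -, hpht, hp0, hp1, hpw⟩ := (eveWinsFrom_iff _).1 hw k (Order.lt_add_one_iff.2 le_rfl)
    univ univ (mk_univ.trans_le hM) (mk_univ.trans_le hN)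
  obtain ⟨q, hq0, hq1, hh0, hh1⟩ := exists_heights_eq_zero_of_eveWinsFrom hM hN k p hpw hpht
    hp0 hp1 (fun a => Order.lt_add_one_iff.1 ((p.h0_lt a (hp0 trivial)).trans_le hα))
    (fun b => Order.lt_add_one_iff.1 ((p.h1_lt b (hp1 trivial)).trans_le hα))
  exact eveWinsInfGame_of_absorbing q.toIPosition (fun a _ => hh0 a) (fun b _ => hh1 b)
    (fun _ _ => (subset_univ _).trans hq0) (fun _ _ => (subset_univ _).trans hq1)

theorem eveWinsInfGame_of_eq_natCast {n : ℕ} (hn : (n : Cardinal) = #M ^ θ + #N ^ θ)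
    (hα : α ≤ n) (hwin : ∀ β ≤ (n : Ordinal), EveWinsGame L M N β θ α) :
    EveWinsInfGame L M N θ α := by
  rcases eq_or_ne θ 0 with rfl | hθ
  · have hempty {X : Type u} (B : Set X) (hB : #B ≤ 0) : B = ∅ :=
      mk_set_eq_zero_iff.1 (nonpos_iff_eq_zero.1 hB)
    exact eveWinsInfGame_of_forall_eq_empty hempty hempty
  have hθ1 : 1 ≤ θ := Cardinal.one_le_iff_ne_zero.2 hθ
  have hM : #M ≤ n := (self_le_power _ hθ1).trans (hn ▸ le_self_add)
  have hN : #N ≤ n := (self_le_power _ hθ1).trans (hn ▸ le_add_self)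
  cases n with
  | zero =>
    have : IsEmpty M := mk_eq_zero_iff.1 (by simpa using hM)
    have : IsEmpty N := mk_eq_zero_iff.1 (by simpa using hN)
    exact eveWinsInfGame_of_forall_eq_empty (fun B _ => B.eq_empty_of_isEmpty)
      (fun B _ => B.eq_empty_of_isEmpty)
  | succ k =>
    have hsize : #M ≤ θ ∧ #N ≤ θ := by
      rcases le_or_gt k 0 with hk | hk
      · have h1 : ((k + 1 : ℕ) : Cardinal) ≤ 1 := by exact_mod_cast Nat.succ_le_succ hk
        exact ⟨hM.trans (h1.trans hθ1), hN.trans (h1.trans hθ1)⟩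
      rcases le_or_gt ℵ₀ θ with hθ | hθ
      · exact ⟨hM.trans (natCast_lt_aleph0.le.trans hθ), hN.trans (natCast_lt_aleph0.le.trans hθ)⟩
      exact EveWinsFrom.mk_le (hwin 2 (by exact_mod_cast Nat.succ_le_succ hk)) one_lt_two hθ1 hθ
    exact eveWinsInfGame_of_mk_le hsize.1 hsize.2 k (by exact_mod_cast hα)
      (by exact_mod_cast hwin _ le_rfl)

theorem Extends.toIExtends {q p : Position L M N θ α} (h : Extends L q p) :
    IExtends L q.toIPosition p.toIPosition :=
  h.2

theorem IPosition.mk_g_le (r : IPosition L M N θ α) : #r.g ≤ θ := by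
  have hinj : InjOn Prod.fst r.g := by
    rintro ⟨a, b⟩ hab ⟨a', b'⟩ hab' (rfl : a = a')
    rw [r.g_iso.1 hab hab']
  calc #r.g = #(Prod.fst '' r.g) := (mk_image_eq_of_injOn _ _ hinj).symm
    _ ≤ #r.A0 := mk_le_mk_of_subset (image_subset_iff.2 fun _ hw => (r.g_sub hw).1)
    _ ≤ θ := r.A0_card

/-- Codes heights in `Option α.ToType : Type u`, which can be counted in `Cardinal.{u}`, unlike
`Ordinal.{u}`; heights on the domain of a position are `< α`, so `none` is never used there. -/
noncomputable def heightCode (α o : Ordinal.{u}) : Option α.ToType :=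
  if h : o < α then some (Ordinal.ToType.mk ⟨o, h⟩) else none

theorem heightCode_injOn : InjOn (heightCode α) (Iio α) := by
  intro o ho o' ho' h
  simp only [heightCode, dif_pos (show o < α from ho), dif_pos (show o' < α from ho'),
    Option.some_inj, EmbeddingLike.apply_eq_iff_eq, Subtype.mk.injEq] at h
  exact h

theorem eq_and_eqOn_of_graphOn_heightCode_eq {X : Type u} {s s' : Set X} {f f' : X → Ordinal.{u}}
    (hf : ∀ x ∈ s, f x < α) (hf' : ∀ x ∈ s', f' x < α)
    (h : s.graphOn (heightCode α ∘ f) = s'.graphOn (heightCode α ∘ f')) :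
    s = s' ∧ EqOn f f' s := by
  have hs : s = s' := by rw [← image_fst_graphOn (heightCode α ∘ f) s, h, image_fst_graphOn]
  subst hs
  exact ⟨rfl, fun x hx => heightCode_injOn (hf x hx) (hf' x hx) (graphOn_inj.1 h hx)⟩

/-- The clock-free part of a position up to its heights outside its domain, which `IExtends`
ignores. -/
abbrev ICode (M N : Type u) (θ : Cardinal.{u}) (α : Ordinal.{u}) : Type u :=
  {s : Set (M × Option α.ToType) // #s ≤ θ} × {s : Set (N × Option α.ToType) // #s ≤ θ} ×
    {s : Set (M × N) // #s ≤ θ}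

noncomputable def IPosition.code (r : IPosition L M N θ α) : ICode M N θ α :=
  (⟨r.A0.graphOn (heightCode α ∘ r.h0), mk_image_le.trans r.A0_card⟩,
    ⟨r.A1.graphOn (heightCode α ∘ r.h1), mk_image_le.trans r.A1_card⟩, ⟨r.g, r.mk_g_le⟩)

theorem IExtends.of_code_eq {q r r' : IPosition L M N θ α} (h : IExtends L q r)
    (hc : r.code = r'.code) : IExtends L q r' := by
  obtain ⟨hA0, hh0⟩ :=
    eq_and_eqOn_of_graphOn_heightCode_eq r.h0_lt r'.h0_lt (congrArg (·.1.1) hc)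
  obtain ⟨hA1, hh1⟩ :=
    eq_and_eqOn_of_graphOn_heightCode_eq r.h1_lt r'.h1_lt (congrArg (·.2.1.1) hc)
  have hg : r.g = r'.g := congrArg (·.2.2.1) hc
  obtain ⟨e0, e1, eg, eback, eh0, eh1⟩ := h
  refine ⟨hA0 ▸ e0, hA1 ▸ e1, hg ▸ eg, fun a b hab ha => hg ▸ eback a b hab (hA0 ▸ ha),
    fun a ha => ?_, fun b hb => ?_⟩
  · rw [← hA0] at ha
    rw [← hh0 ha]
    exact eh0 a ha
  · rw [← hA1] at hb
    rw [← hh1 hb]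
    exact eh1 b hb

theorem mk_iCode_le {κ : Cardinal.{u}} (hκ : κ = #M ^ θ + #N ^ θ) (hinf : ℵ₀ ≤ κ)
    (hα : α.card ≤ κ) : #(ICode M N θ α) ≤ κ := by
  have hθ : θ ≠ 0 := by
    rintro rfl
    exact (add_lt_aleph0 one_lt_aleph0 one_lt_aleph0).not_ge (by simpa [hκ] using hinf)
  have hθ1 : 1 ≤ θ := Cardinal.one_le_iff_ne_zero.2 hθ
  have hpow : κ ^ θ ≤ κ := (hκ ▸ power_add_power_power_of_aleph0_le (hκ ▸ hinf)).le
  have hbounded {X : Type u} (hX : #X ≤ κ) : #{s : Set X // #s ≤ θ} ≤ κ :=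
    (mk_bounded_set_le X θ).trans ((power_le_power_right (max_le hX hinf)).trans hpow)
  have hM : #M ≤ κ := (self_le_power _ hθ1).trans (hκ ▸ le_self_add)
  have hN : #N ≤ κ := (self_le_power _ hθ1).trans (hκ ▸ le_add_self)
  have hheight : #(Option α.ToType) ≤ κ := by
    rw [mk_option, mk_toType]
    exact add_le_of_le hinf hα (one_le_aleph0.trans hinf)
  simp only [ICode, mk_prod, lift_id]
  exact mul_le_of_le hinf (hbounded (mul_le_of_le hinf hM hheight)) (mul_le_of_le hinf
    (hbounded (mul_le_of_le hinf hN hheight)) (hbounded (mul_le_of_le hinf hM hN)))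

theorem eveWinsInfGame_of_mk_iCode_le {κ : Cardinal.{u}} (hκ : ℵ₀ ≤ κ)
    (hcode : #(ICode M N θ α) ≤ κ)
    (hwin : ∀ β < (Order.succ κ).ord, EveWinsGame L M N β θ α) : EveWinsInfGame L M N θ α := by
  have hlim : ∀ β < (Order.succ κ).ord, β + 1 < (Order.succ κ).ord := fun β hβ =>
    (isSuccLimit_ord (hκ.trans (Order.le_succ κ))).add_one_lt hβ
  have hcof : #(ICode M N θ α) < (Order.succ κ).ord.cof := by
    rw [(isRegular_succ hκ).cof_ord]
    exact hcode.trans_lt (Order.lt_succ κ)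
  refine ⟨{r | ∀ β < (Order.succ κ).ord, ∃ q : Position L M N θ α,
    EveWinsFrom L θ α q ∧ q.ht = β ∧ q.toIPosition.code = r.code},
    fun β hβ => ⟨startPos L β, hwin β hβ, rfl, rfl⟩, ?_⟩
  intro r hr B0 B1 hB0 hB1
  have hreply : ∀ β : Iio (Order.succ κ).ord, ∃ q : Position L M N θ α, EveWinsFrom L θ α q ∧
      q.ht = β ∧ IExtends L q.toIPosition r ∧ B0 ⊆ q.A0 ∧ B1 ⊆ q.A1 := by
    rintro ⟨β, hβ⟩
    obtain ⟨p, hpw, hpht, hpr⟩ := hr (β + 1) (hlim β hβ)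
    obtain ⟨q, hext, hqht, hB0q, hB1q, hqw⟩ :=
      (eveWinsFrom_iff p).1 hpw β (hpht ▸ Order.lt_add_one_iff.2 le_rfl) B0 B1 hB0 hB1
    exact ⟨q, hqw, hqht, hext.toIExtends.of_code_eq hpr, hB0q, hB1q⟩
  choose q hqw hqht hqr hB0q hB1q using hreply
  obtain ⟨i, hi⟩ :=
    Ordinal.exists_unbounded_fiber_of_mk_lt_cof hcof fun β => (q β).toIPosition.code
  obtain ⟨δ, -, hδ⟩ := hi 0 (ord_pos.2 (zero_le.trans_lt (Order.lt_succ κ)))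
  refine ⟨(q δ).toIPosition, fun γ hγ => ?_, hqr δ, hB0q δ, hB1q δ⟩
  obtain ⟨ε, hγε, hε⟩ := hi γ hγ
  exact ⟨(q ε).withHt γ, (hqw ε).withHt (hqht ε ▸ hγε), rfl, hε.trans hδ.symm⟩

end DGPaper

open DGPaper in
/-- Proposition `proposition:very-big-beta`.  Let `M₀`, `M₁` be
structures in the same vocabulary, `κ = |M₀^θ ∪ M₁^θ|` and `α < κ⁺`.  If Eve has a
winning strategy in `DG^β_{θ,α}(M₀,M₁)` for all `β < κ⁺`, then Eve has a winning strategy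
in the infinite game `DG_{θ,α}(M₀,M₁)`. -/
theorem eve_wins_inf_of_all_clocks (L : FirstOrder.Language.{u, u})
    (M₀ M₁ : Type u) [L.Structure M₀] [L.Structure M₁]
    (θ : Cardinal.{u}) (α : Ordinal.{u}) (κ : Cardinal.{u})
    (hκ : κ = #M₀ ^ θ + #M₁ ^ θ)
    (hα : α < (Order.succ κ).ord)
    (hwin : ∀ β < (Order.succ κ).ord, EveWinsGame L M₀ M₁ β θ α) :
    EveWinsInfGame L M₀ M₁ θ α := by
  rcases lt_or_ge κ ℵ₀ with hfin | hinf
  · obtain ⟨n, rfl⟩ := lt_aleph0.1 hfin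
    have hsucc : (Order.succ (n : Cardinal.{u})).ord = Order.succ (n : Ordinal) := by
      rw [succ_natCast, ← Nat.cast_succ, ord_natCast, Nat.cast_succ, Order.succ_eq_add_one]
    rw [hsucc] at hα hwin
    exact eveWinsInfGame_of_eq_natCast hκ (Order.lt_succ_iff.1 hα)
      fun β hβ => hwin β (Order.lt_succ_iff.2 hβ)
  · exact eveWinsInfGame_of_mk_iCode_le hinf
      (mk_iCode_le hκ hinf (Order.lt_succ_iff.1 (lt_ord.1 hα))) hwin
end

section
/- Let n be a natural number, λ a regular uncountable cardinal, I a set with |I| < λ and |I^ω| = |I|, and T a fully λ-splitting subtree of λ^{≤n}. Then for any function F : T → I there exist a fully λ-splitting subtree R ⊆ T and a function d : {0,…,n} → I such that F(s) = d(|s|) for all s ∈ R. -/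
/-!
Induction on the height `n`. Above each of the `λ` many successors `ξ` of the root of a tree of
height `n + 1` sits a tree of height `n`, which by induction has a fully splitting subtree on
which `F` depends only on the level, through some `d_ξ`. The restrictions of the `d_ξ` to levels
`0, …, n` range over `I^{n+1}`, a set of size `< λ`, so by regularity `λ` many `ξ` share the
same one; grafting the stabilised trees above those `ξ` onto the root gives the subtree.
-/

open Cardinal

universe u

/-- `T` is a subtree of `λ^{≤n}`: a prefix-closed set of sequences (of length `≤ n`) of
elements of a type indexing `λ`, containing the empty sequence. -/
def IsSubtree {ι : Type u} (n : ℕ) (T : Set (List ι)) : Prop :=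
  [] ∈ T ∧ (∀ s ∈ T, s.length ≤ n) ∧ ∀ s ∈ T, ∀ t : List ι, t.IsPrefix s → t ∈ T

def IsFullySplitting {ι : Type u} (lam : Cardinal.{u}) (n : ℕ) (T : Set (List ι)) : Prop :=
  IsSubtree n T ∧ ∀ s ∈ T, s.length < n → #{ξ : ι | s ++ [ξ] ∈ T} = lam

theorem Cardinal.mk_fin_arrow_lt {I : Type u} {c : Cardinal.{u}} (hI : #I < c) (hc : ℵ₀ ≤ c)
    (m : ℕ) : #(Fin m → I) < c := by
  rcases lt_or_ge #I ℵ₀ with hfin | hinf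
  · have : Finite I := Cardinal.lt_aleph0_iff_finite.1 hfin
    exact (Cardinal.lt_aleph0_of_finite _).trans_le hc
  · calc #(Fin m → I) = #I ^ m := by simp
      _ ≤ #I := Cardinal.power_nat_le hinf
      _ < c := hI

theorem Cardinal.IsRegular.exists_subset_card_eq_const {lam : Cardinal.{u}} (hreg : lam.IsRegular)
    {ι J : Type u} (hJ : #J < lam) {A : Set ι} (hA : #A = lam) (c : ι → J) :
    ∃ B ⊆ A, #B = lam ∧ ∃ j, ∀ ξ ∈ B, c ξ = j := by
  obtain ⟨j, B, hBA, hB, hc⟩ := Cardinal.infinite_pigeonhole_set (fun ξ : A => c ξ) lam hA.ge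
    hreg.aleph0_le (hreg.cof_ord.symm ▸ hJ)
  exact ⟨B, hBA, le_antisymm (hA ▸ Cardinal.mk_le_mk_of_subset hBA) hB, j, hc⟩

section

variable {ι : Type u}

def treeAbove (T : Set (List ι)) (ξ : ι) : Set (List ι) := {t | ξ :: t ∈ T}

def graft (B : Set ι) (S : ι → Set (List ι)) : Set (List ι) :=
  {s | ∀ ξ t, s = ξ :: t → ξ ∈ B ∧ t ∈ S ξ}

@[simp]
theorem nil_mem_graft (B : Set ι) (S : ι → Set (List ι)) : [] ∈ graft B S := by
  simp [graft]

@[simp]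
theorem cons_mem_graft {B : Set ι} {S : ι → Set (List ι)} {ξ : ι} {t : List ι} :
    ξ :: t ∈ graft B S ↔ ξ ∈ B ∧ t ∈ S ξ := by
  simp [graft]

theorem graft_subset {T : Set (List ι)} (hT : [] ∈ T) {B : Set ι} {S : ι → Set (List ι)}
    (hS : ∀ ξ ∈ B, S ξ ⊆ treeAbove T ξ) : graft B S ⊆ T := by
  rintro (_ | ⟨ξ, t⟩) hs
  · exact hT
  · obtain ⟨hξ, ht⟩ := cons_mem_graft.1 hs
    exact hS ξ hξ ht

namespace IsFullySplitting

variable {lam : Cardinal.{u}} {n : ℕ} {T : Set (List ι)}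

theorem treeAbove (hT : IsFullySplitting lam (n + 1) T) {ξ : ι} (hξ : [ξ] ∈ T) :
    IsFullySplitting lam n (treeAbove T ξ) := by
  obtain ⟨⟨-, hlen, hpre⟩, hsplit⟩ := hT
  refine ⟨⟨hξ, fun t ht => ?_, fun t ht s hst => ?_⟩, fun t ht htn => ?_⟩
  · simpa using hlen _ ht
  · exact hpre _ ht _ (List.cons_prefix_cons.2 ⟨rfl, hst⟩)
  · simpa [_root_.treeAbove] using hsplit (ξ :: t) ht (by simpa using htn)

theorem graft {B : Set ι} (hB : #B = lam) {S : ι → Set (List ι)}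
    (hS : ∀ ξ ∈ B, IsFullySplitting lam n (S ξ)) : IsFullySplitting lam (n + 1) (graft B S) := by
  refine ⟨⟨nil_mem_graft B S, ?_, ?_⟩, ?_⟩
  · rintro (_ | ⟨ξ, t⟩) hs
    · simp
    · obtain ⟨hξ, ht⟩ := cons_mem_graft.1 hs
      simpa using (hS ξ hξ).1.2.1 t ht
  · rintro (_ | ⟨ξ, t⟩) hs s hst
    · rw [List.prefix_nil.1 hst]
      exact nil_mem_graft B S
    · obtain ⟨hξ, ht⟩ := cons_mem_graft.1 hs
      obtain rfl | ⟨s', rfl, hs't⟩ := List.prefix_cons_iff.1 hst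
      · exact nil_mem_graft B S
      · exact cons_mem_graft.2 ⟨hξ, (hS ξ hξ).1.2.2 t ht s' hs't⟩
  · rintro (_ | ⟨ξ, t⟩) hs hsn
    · convert hB using 3
      simpa using fun ξ hξ => (hS ξ hξ).1.1
    · obtain ⟨hξ, ht⟩ := cons_mem_graft.1 hs
      simpa [hξ] using (hS ξ hξ).2 t ht (by simpa using hsn)

theorem exists_levelwise_constant (hreg : lam.IsRegular) {I : Type u} (hI : #I < lam)
    (hT : IsFullySplitting lam n T) (F : List ι → I) :
    ∃ R ⊆ T, IsFullySplitting lam n R ∧ ∃ d : ℕ → I, ∀ s ∈ R, F s = d s.length := by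
  induction n generalizing T F with
  | zero =>
    refine ⟨T, subset_rfl, hT, fun _ => F [], fun s hs => ?_⟩
    rw [List.eq_nil_of_length_eq_zero (Nat.le_zero.1 (hT.1.2.1 s hs))]
  | succ n ih =>
    have : Nonempty I := ⟨F []⟩
    choose! S hST hS d hd using fun ξ (hξ : [ξ] ∈ T) =>
      ih (hT.treeAbove hξ) (fun t => F (ξ :: t))
    obtain ⟨B, hBA, hB, e, he⟩ := hreg.exists_subset_card_eq_const
      (Cardinal.mk_fin_arrow_lt hI hreg.aleph0_le (n + 1))
      (by simpa using hT.2 [] hT.1.1 (Nat.succ_pos n)) (fun ξ (k : Fin (n + 1)) => d ξ k)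
    obtain ⟨ξ₀, hξ₀⟩ : B.Nonempty :=
      Set.nonempty_coe_sort.1 <| Cardinal.mk_ne_zero_iff.1 <| hB.trans_ne hreg.ne_zero
    refine ⟨_root_.graft B S, graft_subset hT.1.1 fun ξ hξ => hST ξ (hBA hξ),
      IsFullySplitting.graft hB fun ξ hξ => hS ξ (hBA hξ),
      fun k => Nat.casesOn k (F []) (d ξ₀), ?_⟩
    rintro (_ | ⟨ξ, t⟩) hs
    · rfl
    · obtain ⟨hξ, ht⟩ := cons_mem_graft.1 hs
      have hlt : t.length < n + 1 := Nat.lt_succ_of_le ((hS ξ (hBA hξ)).1.2.1 t ht)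
      calc F (ξ :: t) = d ξ t.length := hd ξ (hBA hξ) t ht
        _ = d ξ₀ t.length := congrFun ((he ξ hξ).trans (he ξ₀ hξ₀).symm) ⟨t.length, hlt⟩

end IsFullySplitting

end

theorem fully_splitting_stabilize_general (n : ℕ) (lam : Cardinal.{u})
    (hreg : lam.IsRegular)
    (I : Type u) (hI : #I < lam)
    (T : Set (List lam.ord.ToType)) (hT : IsFullySplitting lam n T)
    (F : List lam.ord.ToType → I) :
    ∃ R : Set (List lam.ord.ToType), R ⊆ T ∧ IsFullySplitting lam n R ∧
      ∃ d : ℕ → I, ∀ s ∈ R, F s = d s.length :=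
  hT.exists_levelwise_constant hreg hI F

/-- the stabilisation claim.  Let `n` be a natural number, `λ` a
regular uncountable cardinal, `I` a set with `|I| < λ` and `|I^ω| = |I|`, and `T` a fully
`λ`-splitting subtree of `λ^{≤n}` (whose levels we index by the type `λ.ord.toType` of
cardinality `λ`).  Then for any `F : T → I` there exist a fully `λ`-splitting subtree
`R ⊆ T` and `d : {0,…,n} → I` with `F(s) = d(|s|)` for all `s ∈ R`. -/
theorem fully_splitting_stabilize (n : ℕ) (lam : Cardinal.{u})
    (hreg : lam.IsRegular) (hunc : Cardinal.aleph0 < lam)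
    (I : Type u) (hI : #I < lam) (hIω : #I ^ Cardinal.aleph0 = #I)
    (T : Set (List lam.ord.ToType)) (hT : IsFullySplitting lam n T)
    (F : List lam.ord.ToType → I) :
    ∃ R : Set (List lam.ord.ToType), R ⊆ T ∧ IsFullySplitting lam n R ∧
      ∃ d : ℕ → I, ∀ s ∈ R, F s = d s.length :=
  fully_splitting_stabilize_general n lam hreg I hI T hT F
end

section
/- Suppose cof(θ) > ω, α is a countable ordinal, and β > α. Let M₀ and M₁ be structures in the empty vocabulary with |M₀| ≥ θ and |M₁| < θ. Then Adam has a winning strategy in DG^β_{θ,α}(M₀,M₁). -/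
open Cardinal Set FirstOrder FirstOrder.Language

universe u

/-- The empty vocabulary (no function and no relation symbols). -/
def emptyLang : FirstOrder.Language.{u, u} :=
  ⟨fun _ => PEmpty, fun _ => PEmpty⟩

noncomputable instance emptyLangStructure (M : Type u) : emptyLang.{u}.Structure M where
  funMap := fun f _ => f.elim
  RelMap := fun r _ => r.elim

/-!
Adam first demands `θ` points of `M₀` with clock `α`. Fewer than `θ` of them can have height `0`,
since those are matched injectively into `M₁`; as `α` is countable and `cof θ > ω`, pigeonhole
gives `θ` points sharing one nonzero height `γ`. Adam then demands clock `γ`: every reply of Eve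
lowers the heights of these points, and pigeonhole again yields `θ` points at a common nonzero
height `γ' < γ`. The heights cannot descend forever, so Eve eventually has no legal reply.
Only the injectivity of `g` is used, so the argument works in any vocabulary.
-/

theorem Cardinal.exists_le_mk_sep_eq_of_lt {X : Type u} {θ : Cardinal.{u}} {δ : Ordinal.{u}}
    (hθ : ℵ₀ ≤ θ) (hδ : δ.card < θ.ord.cof) {S : Set X} (hS : θ ≤ #S) (f : X → Ordinal.{u})
    (hf : ∀ x ∈ S, f x < δ) : ∃ γ < δ, θ ≤ #{x ∈ S | f x = γ} := by
  obtain ⟨i, t, htS, ht, hti⟩ := infinite_pigeonhole_set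
    (fun x : S => Ordinal.ToType.mk ⟨f x, hf x x.2⟩) θ hS hθ (by rwa [Cardinal.mk_toType])
  refine ⟨(Ordinal.ToType.mk.symm i).1, (Ordinal.ToType.mk.symm i).2,
    ht.trans (mk_le_mk_of_subset fun x hx => ⟨htS hx, ?_⟩)⟩
  simp [← hti hx]

namespace DGPaper

variable {L : FirstOrder.Language.{u, u}} {M N : Type u} [L.Structure M] [L.Structure N]
  {θ : Cardinal.{u}} {α : Ordinal.{u}}

theorem Position.mk_height_zero_le (p : Position L M N θ α) :
    #{a ∈ p.A0 | p.h0 a = 0} ≤ #N := by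
  choose F hF using fun a : {a ∈ p.A0 | p.h0 a = 0} => p.h0_zero a a.2.1 a.2.2
  exact mk_le_of_injective (f := F) fun a a' h => Subtype.ext (p.g_iso.2.1 (hF a) (h ▸ hF a'))

theorem Position.exists_large_level (hcof : ℵ₀ < θ.ord.cof) (hN : #N < θ)
    (p : Position L M N θ α) {δ : Ordinal.{u}} (hδ : δ.card ≤ ℵ₀) {S : Set M}
    (hSA : S ⊆ p.A0) (hS : θ ≤ #S) (hSδ : ∀ a ∈ S, p.h0 a < δ) :
    ∃ γ < δ, γ ≠ 0 ∧ θ ≤ #{a ∈ p.A0 | p.h0 a = γ} := by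
  have hθ : ℵ₀ ≤ θ := hcof.le.trans (Ordinal.cof_ord_le θ)
  obtain ⟨γ, hγδ, hγ⟩ := exists_le_mk_sep_eq_of_lt hθ (hδ.trans_lt hcof) hS p.h0 hSδ
  have hlevel : {a ∈ S | p.h0 a = γ} ⊆ {a ∈ p.A0 | p.h0 a = γ} := fun a ha => ⟨hSA ha.1, ha.2⟩
  refine ⟨γ, hγδ, ?_, hγ.trans (mk_le_mk_of_subset hlevel)⟩
  rintro rfl
  exact (hγ.trans ((mk_le_mk_of_subset hlevel).trans p.mk_height_zero_le)).not_gt hN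

theorem adamWinsFrom_of_large_level (hcof : ℵ₀ < θ.ord.cof) (hN : #N < θ) {γ : Ordinal.{u}}
    (hγ : γ.card ≤ ℵ₀) (p : Position L M N θ α) (hγ0 : γ ≠ 0) (hγp : γ < p.ht)
    (hlevel : θ ≤ #{a ∈ p.A0 | p.h0 a = γ}) : AdamWinsFrom L θ α p := by
  induction γ using WellFoundedLT.induction generalizing p with
  | _ γ IH =>
    refine AdamWinsFrom.step p γ hγp ∅ ∅ (by simp) (by simp) fun q hq hqγ _ _ => ?_
    obtain ⟨-, hA0, -, -, -, hh0, -⟩ := hq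
    have hlt : ∀ a ∈ {a ∈ p.A0 | p.h0 a = γ}, q.h0 a < γ := fun a ha =>
      ha.2 ▸ (hh0 a ha.1).2 (ha.2 ▸ hγ0)
    obtain ⟨γ', hγ'γ, hγ'0, hγ'⟩ :=
      q.exists_large_level hcof hN hγ (fun a ha => hA0 ha.1) hlevel hlt
    exact IH γ' hγ'γ ((Ordinal.card_le_card hγ'γ.le).trans hγ) q hγ'0
      (hγ'γ.trans_eq hqγ.symm) hγ'

end DGPaper

open DGPaper in
/-- Proposition `size`.  Suppose `cof(θ) > ω`, `α` is a countable
ordinal and `β > α`.  Let `M₀` and `M₁` be structures in the empty vocabulary with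
`|M₀| ≥ θ` and `|M₁| < θ`.  Then Adam has a winning strategy in `DG^β_{θ,α}(M₀,M₁)`. -/
theorem adam_wins_of_card_gap (M₀ M₁ : Type u)
    (θ : Cardinal.{u}) (α β : Ordinal.{u})
    (hcof : Cardinal.aleph0 < θ.ord.cof)
    (hα : α.card ≤ Cardinal.aleph0)
    (hβ : α < β)
    (hM₀ : θ ≤ #M₀) (hM₁ : #M₁ < θ) :
    AdamWinsGame emptyLang.{u} M₀ M₁ β θ α := by
  obtain ⟨S, hS⟩ := le_mk_iff_exists_set.mp hM₀
  refine AdamWinsFrom.step _ α hβ S ∅ hS.le (by simp) fun q _ hqα hSq _ => ?_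
  obtain ⟨γ, hγα, hγ0, hγ⟩ :=
    q.exists_large_level hcof hM₁ hα hSq hS.ge fun a ha => q.h0_lt a (hSq ha)
  exact adamWinsFrom_of_large_level hcof hM₁ ((Ordinal.card_le_card hγα.le).trans hα) q hγ0
    (hγα.trans_eq hqα.symm) hγ
end

section
/- Let θ be an infinite cardinal, β an ordinal, and M a structure in a vocabulary τ of cardinality ≤ θ. Then there is a substructure N of M of cardinality at most ℶ_{β+1}(θ) such that M ≡^β_θ N (M and N are θ-back-and-forth equivalent up to β). -/
open Cardinal Set FirstOrder FirstOrder.Language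

universe u

namespace DGPaper

variable (L : FirstOrder.Language.{u, u})

/-- The Karp back-and-forth hierarchy `ℐ^γ_θ(M, N)` of families of partial isomorphisms:
`ℐ⁰` consists of all partial isomorphisms of size `≤ θ`, and `f ∈ ℐ^γ` iff `f` is a
partial isomorphism of size `≤ θ` such that for all `γ' < γ`, every set of size `≤ θ` on
either side can be covered by some extension of `f` lying in `ℐ^{γ'}`. -/
noncomputable def BF (M N : Type u) [L.Structure M] [L.Structure N] (θ : Cardinal.{u}) :
    Ordinal.{u} → Set (Set (M × N)) :=
  WellFounded.fix (C := fun _ : Ordinal.{u} => Set (Set (M × N))) Ordinal.lt_wf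
    fun γ IH =>
      {g | IsPartialIso L M N g ∧ #g ≤ θ ∧
        ∀ γ' (h : γ' < γ),
          (∀ A : Set M, #A ≤ θ →
            ∃ g', g' ∈ IH γ' h ∧ g ⊆ g' ∧ A ⊆ Prod.fst '' g') ∧
          (∀ B : Set N, #B ≤ θ →
            ∃ g', g' ∈ IH γ' h ∧ g ⊆ g' ∧ B ⊆ Prod.snd '' g')}

/-- `M ≡^γ_θ N`: the structures `M` and `N` are `θ`-back-and-forth equivalent up to `γ`,
i.e. `ℐ^γ_θ(M, N)` is nonempty. -/
noncomputable def BFEquiv (M N : Type u) [L.Structure M] [L.Structure N]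
    (θ : Cardinal.{u}) (γ : Ordinal.{u}) : Prop :=
  (BF L M N θ γ).Nonempty

/-- The beth function starting at `θ`: `ℶ_0(θ) = θ`, `ℶ_{ξ+1}(θ) = 2^{ℶ_ξ(θ)}`, and
suprema at limits. -/
noncomputable def bethAt (θ : Cardinal.{u}) (o : Ordinal.{u}) : Cardinal.{u} :=
  Ordinal.limitRecOn o θ (fun _ ih => 2 ^ ih) (fun o _ ih => ⨆ i : Set.Iio o, ih i.1 i.2)

end DGPaper

/-!
Index θ-tuples by a set `S` of size θ, split as `S ≃ S ⊕ S`, so that a tuple extends to tuples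
with θ new entries. Two tuples are `γ`-equivalent when they have the same quantifier-free type
and, for each `γ' < γ`, every extension of one is `γ'`-equivalent to some extension of the other.
A `γ`-class is determined by the quantifier-free type and the set of lower classes of
extensions, so by induction there are at most `ℶ_{γ+1}(θ)` classes of tuples in `M`.

Close `{m}` under the functions of `M` and under adding, for every tuple from the set and every
`β`-class of its extensions, one extension in that class. Iterating `θ⁺` times (`θ⁺` is regular)
gives a substructure `N` of size `ℶ_{β+1}(θ)`, because `ℶ_{β+1}(θ) ^ θ = ℶ_{β+1}(θ)`. Each
`N`-tuple is then `β`-equivalent, in the back-and-forth sense between `M` and `N`, to itself,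
and the graphs of equivalent tuples form the required partial isomorphisms.
-/

namespace DGPaper

section Beth

variable {θ : Cardinal.{u}}

@[simp] theorem bethAt_zero : bethAt θ 0 = θ := Ordinal.limitRecOn_zero _ _ _

@[simp] theorem bethAt_add_one (o : Ordinal.{u}) : bethAt θ (o + 1) = 2 ^ bethAt θ o :=
  Ordinal.limitRecOn_add_one _ _ _ _

theorem bethAt_limit {o : Ordinal.{u}} (ho : Order.IsSuccLimit o) :
    bethAt θ o = ⨆ i : Iio o, bethAt θ i.1 :=
  Ordinal.limitRecOn_limit _ _ _ _ ho

theorem bethAt_strictMono : StrictMono (bethAt θ) := by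
  intro a b hab
  induction b using Ordinal.limitRecOn generalizing a with
  | zero => exact absurd hab not_lt_zero
  | add_one c IH =>
    rw [bethAt_add_one]
    refine lt_of_le_of_lt ?_ (cantor _)
    rcases (Order.lt_add_one_iff.1 hab).eq_or_lt with rfl | h
    · rfl
    · exact (IH h).le
  | limit b hb _ =>
    rw [bethAt_limit hb]
    refine (cantor _).trans_le ?_
    rw [← bethAt_add_one]
    exact le_ciSup bddAbove_of_small (⟨_, hb.add_one_lt hab⟩ : Iio b)

theorem bethAt_mono : Monotone (bethAt θ) := bethAt_strictMono.monotone

theorem le_bethAt (o : Ordinal.{u}) : θ ≤ bethAt θ o := by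
  simpa only [bethAt_zero] using bethAt_mono (zero_le : 0 ≤ o)

theorem card_le_bethAt (o : Ordinal.{u}) : o.card ≤ bethAt θ o := by
  have hnormal : Order.IsNormal (Cardinal.ord ∘ bethAt θ) := by
    refine Order.isNormal_iff.2 ⟨Cardinal.ord_strictMono.comp bethAt_strictMono, fun o ho a ha ↦ ?_⟩
    rw [Function.comp_apply, bethAt_limit ho, Cardinal.ord_le]
    exact ciSup_le' fun b => Cardinal.ord_le.1 (ha _ b.2)
  simpa using Ordinal.card_le_card (hnormal.strictMono.le_apply (x := o))

end Beth

section QFType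

variable {L : FirstOrder.Language.{u, u}} {S : Type*} {M N P : Type u} [L.Structure M]
  [L.Structure N] [L.Structure P]

variable (L) in
def qfType (s : S → M) : Set (L.Formula S) := {φ | φ.IsQF ∧ φ.Realize s}

variable {s : S → M} {t : S → N}

theorem realize_iff_of_qfType_eq (h : qfType L s = qfType L t) {φ : L.Formula S} (hφ : φ.IsQF) :
    φ.Realize s ↔ φ.Realize t := by
  simpa [qfType, hφ] using Set.ext_iff.1 h φ

theorem term_realize_eq_iff_of_qfType_eq (h : qfType L s = qfType L t) (τ₁ τ₂ : L.Term S) :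
    τ₁.realize s = τ₂.realize s ↔ τ₁.realize t = τ₂.realize t := by
  simpa using realize_iff_of_qfType_eq h (BoundedFormula.IsAtomic.equal _ _).isQF (φ := τ₁.equal τ₂)

theorem relMap_iff_of_qfType_eq (h : qfType L s = qfType L t) {n : ℕ} (R : L.Relations n)
    (v : Fin n → S) :
    (Structure.RelMap R fun i => s (v i)) ↔ Structure.RelMap R fun i => t (v i) := by
  simpa using realize_iff_of_qfType_eq h (BoundedFormula.IsAtomic.rel _ _).isQF
    (φ := R.formula fun i => Term.var (v i))

theorem isPartialIso_range_of_qfType_eq (h : qfType L s = qfType L t) :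
    IsPartialIso L M N (range fun i => (s i, t i)) := by
  have hvar (i j : S) : s i = s j ↔ t i = t j :=
    term_realize_eq_iff_of_qfType_eq h (Term.var i) (Term.var j)
  have hfun {n} (f : L.Functions n) (v : Fin n → S) (j : S) :
      Structure.funMap f (fun i => s (v i)) = s j ↔
        Structure.funMap f (fun i => t (v i)) = t j := by
    simpa using
      term_realize_eq_iff_of_qfType_eq h (Term.func f fun i => Term.var (v i)) (Term.var j)
  simp only [IsPartialIso, mem_range, Prod.mk.injEq]
  refine ⟨?_, ?_, ?_, ?_⟩
  · rintro _ _ _ ⟨i, rfl, rfl⟩ ⟨j, hij, rfl⟩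
    exact (hvar i j).1 hij.symm
  · rintro _ _ _ ⟨i, rfl, rfl⟩ ⟨j, rfl, hij⟩
    exact (hvar i j).2 hij.symm
  · intro n R x y hxy
    choose v hvx hvy using hxy
    obtain rfl : (fun k => s (v k)) = x := funext hvx
    obtain rfl : (fun k => t (v k)) = y := funext hvy
    exact relMap_iff_of_qfType_eq h R v
  · intro n f x y hxy
    choose v hvx hvy using hxy
    obtain rfl : (fun k => s (v k)) = x := funext hvx
    obtain rfl : (fun k => t (v k)) = y := funext hvy
    refine ⟨?_, ?_⟩
    · rintro _ ⟨j, hj, rfl⟩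
      exact ((hfun f v j).1 hj.symm).symm
    · rintro _ ⟨j, rfl, hj⟩
      exact ((hfun f v j).2 hj.symm).symm

theorem qfType_embedding_comp (f : N ↪[L] P) (t : S → N) : qfType L (f ∘ t) = qfType L t := by
  ext φ
  refine and_congr_right fun hφ => ?_
  have := hφ.realize_embedding f (v := t) (xs := default)
  rwa [Subsingleton.elim (f ∘ default) default] at this

end QFType

section Tuples

variable {L : FirstOrder.Language.{u, u}} {S : Type*} {M N P : Type u} [L.Structure M]
  [L.Structure N] [L.Structure P]

/-- `restrict E s' = s` says that `s'` extends `s`: it repeats `s` on the copy `E.symm ∘ Sum.inl`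
of `S` and has `#S` further entries. -/
def restrict (E : S ≃ S ⊕ S) {α : Type*} (s : S → α) : S → α := fun i => s (E.symm (Sum.inl i))

variable (L) in
def TupleEquiv (E : S ≃ S ⊕ S) (γ : Ordinal.{u}) (s : S → M) (t : S → N) : Prop :=
  qfType L s = qfType L t ∧ ∀ γ' < γ,
    (∀ s', restrict E s' = s → ∃ t', restrict E t' = t ∧ TupleEquiv E γ' s' t') ∧
    (∀ t', restrict E t' = t → ∃ s', restrict E s' = s ∧ TupleEquiv E γ' s' t')
termination_by γ

variable {E : S ≃ S ⊕ S}

theorem tupleEquiv_iff {γ : Ordinal.{u}} {s : S → M} {t : S → N} :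
    TupleEquiv L E γ s t ↔ qfType L s = qfType L t ∧ ∀ γ' < γ,
      (∀ s', restrict E s' = s → ∃ t', restrict E t' = t ∧ TupleEquiv L E γ' s' t') ∧
      (∀ t', restrict E t' = t → ∃ s', restrict E s' = s ∧ TupleEquiv L E γ' s' t') := by
  rw [TupleEquiv]

namespace TupleEquiv

variable {γ : Ordinal.{u}}

theorem qfType_eq {s : S → M} {t : S → N} (h : TupleEquiv L E γ s t) :
    qfType L s = qfType L t :=
  (tupleEquiv_iff.1 h).1

theorem forth {s : S → M} {t : S → N} (h : TupleEquiv L E γ s t) {γ' : Ordinal.{u}}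
    (hγ' : γ' < γ) {s' : S → M} (hs' : restrict E s' = s) :
    ∃ t', restrict E t' = t ∧ TupleEquiv L E γ' s' t' :=
  ((tupleEquiv_iff.1 h).2 γ' hγ').1 s' hs'

theorem back {s : S → M} {t : S → N} (h : TupleEquiv L E γ s t) {γ' : Ordinal.{u}}
    (hγ' : γ' < γ) {t' : S → N} (ht' : restrict E t' = t) :
    ∃ s', restrict E s' = s ∧ TupleEquiv L E γ' s' t' :=
  ((tupleEquiv_iff.1 h).2 γ' hγ').2 t' ht'

theorem mono {γ' : Ordinal.{u}} (hγ : γ' ≤ γ) {s : S → M} {t : S → N}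
    (h : TupleEquiv L E γ s t) : TupleEquiv L E γ' s t :=
  tupleEquiv_iff.2 ⟨h.qfType_eq, fun _ hγ'' => (tupleEquiv_iff.1 h).2 _ (hγ''.trans_le hγ)⟩

theorem refl (γ : Ordinal.{u}) (s : S → M) : TupleEquiv L E γ s s := by
  induction γ using WellFoundedLT.induction generalizing s with | _ γ IH => ?_
  exact tupleEquiv_iff.2 ⟨rfl, fun γ' hγ' =>
    ⟨fun s' hs' => ⟨s', hs', IH γ' hγ' s'⟩, fun s' hs' => ⟨s', hs', IH γ' hγ' s'⟩⟩⟩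

theorem symm {s : S → M} {t : S → N} (h : TupleEquiv L E γ s t) : TupleEquiv L E γ t s := by
  induction γ using WellFoundedLT.induction generalizing s t with | _ γ IH => ?_
  refine tupleEquiv_iff.2 ⟨h.qfType_eq.symm, fun γ' hγ' => ⟨fun t' ht' => ?_, fun s' hs' => ?_⟩⟩
  · obtain ⟨s', hs', h'⟩ := h.back hγ' ht'
    exact ⟨s', hs', IH γ' hγ' h'⟩
  · obtain ⟨t', ht', h'⟩ := h.forth hγ' hs'
    exact ⟨t', ht', IH γ' hγ' h'⟩

theorem trans {s : S → M} {t : S → N} {u : S → P} (hst : TupleEquiv L E γ s t)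
    (htu : TupleEquiv L E γ t u) : TupleEquiv L E γ s u := by
  induction γ using WellFoundedLT.induction generalizing s t u with | _ γ IH => ?_
  refine tupleEquiv_iff.2 ⟨hst.qfType_eq.trans htu.qfType_eq, fun γ' hγ' =>
    ⟨fun s' hs' => ?_, fun u' hu' => ?_⟩⟩
  · obtain ⟨t', ht', hst'⟩ := hst.forth hγ' hs'
    obtain ⟨u', hu', htu'⟩ := htu.forth hγ' ht'
    exact ⟨u', hu', IH γ' hγ' hst' htu'⟩
  · obtain ⟨t', ht', htu'⟩ := htu.back hγ' hu'
    obtain ⟨s', hs', hst'⟩ := hst.back hγ' ht'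
    exact ⟨s', hs', IH γ' hγ' hst' htu'⟩

end TupleEquiv

end Tuples

section Counting

variable {L : FirstOrder.Language.{u, u}} {S M : Type u} [L.Structure M] {E : S ≃ S ⊕ S}
  {θ : Cardinal.{u}}

theorem mk_formula_le (hθ : ℵ₀ ≤ θ) (hL : L.card ≤ θ) (hS : #S ≤ θ) : #(L.Formula S) ≤ θ := by
  refine (mk_le_of_injective (f := fun φ : L.Formula S => (⟨0, φ⟩ : Σ n, L.BoundedFormula S n))
    fun _ _ h => eq_of_heq (Sigma.mk.inj h).2).trans ?_
  refine BoundedFormula.card_le.trans (max_le hθ ?_)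
  simpa using (add_le_add hS hL).trans (add_eq_self hθ).le

variable (L E) in
def tupleClass (γ : Ordinal.{u}) (s : S → M) : Set (S → M) := {t | TupleEquiv L E γ s t}

theorem TupleEquiv.tupleClass_eq {γ : Ordinal.{u}} {s t : S → M} (h : TupleEquiv L E γ s t) :
    tupleClass L E γ s = tupleClass L E γ t :=
  Set.ext fun _ => ⟨h.symm.trans, h.trans⟩

theorem tupleEquiv_of_extension_classes {γ : Ordinal.{u}} {s t : S → M}
    (hqf : qfType L s = qfType L t)
    (hext : ∀ c, (∃ γ' < γ, ∃ s', restrict E s' = s ∧ tupleClass L E γ' s' = c) ↔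
      (∃ γ' < γ, ∃ t', restrict E t' = t ∧ tupleClass L E γ' t' = c)) :
    TupleEquiv L E γ s t := by
  refine tupleEquiv_iff.2 ⟨hqf, fun γ' hγ' => ⟨fun s' hs' => ?_, fun t' ht' => ?_⟩⟩
  · obtain ⟨γ'', -, t', ht', hc⟩ := (hext _).1 ⟨γ', hγ', s', hs', rfl⟩
    exact ⟨t', ht', (hc ▸ TupleEquiv.refl γ'' t' : t' ∈ tupleClass L E γ' s')⟩
  · obtain ⟨γ'', -, s', hs', hc⟩ := (hext _).2 ⟨γ', hγ', t', ht', rfl⟩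
    exact ⟨s', hs', (hc ▸ TupleEquiv.refl γ'' s' : s' ∈ tupleClass L E γ' t').symm⟩

theorem mk_range_tupleClass_le (hθ : ℵ₀ ≤ θ) (hL : L.card ≤ θ) (hS : #S ≤ θ) (γ : Ordinal.{u}) :
    #(range (tupleClass L E γ : (S → M) → Set (S → M))) ≤ bethAt θ (γ + 1) := by
  induction γ using WellFoundedLT.induction with | _ γ IH => ?_
  set U := ⋃ γ' < γ, range (tupleClass L E γ' : (S → M) → Set (S → M))
  have hU : #U ≤ bethAt θ γ :=
    mk_biUnion_le_of_le (card_le_bethAt γ) (hθ.trans (le_bethAt γ)) _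
      fun γ' hγ' => (IH γ' hγ').trans (bethAt_mono (Order.add_one_le_of_lt hγ'))
  let F (s : S → M) : Set (L.Formula S) × Set U :=
    (qfType L s, {c | ∃ γ' < γ, ∃ s', restrict E s' = s ∧ tupleClass L E γ' s' = c})
  have hF {s t : S → M} (h : F s = F t) : TupleEquiv L E γ s t := by
    have hU {s : S → M} {c} (hc : ∃ γ' < γ, ∃ s', restrict E s' = s ∧ tupleClass L E γ' s' = c) :
        c ∈ U := by
      obtain ⟨γ', hγ', s', -, rfl⟩ := hc
      exact mem_biUnion hγ' (mem_range_self s')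
    have hsnd := Set.ext_iff.1 (congrArg Prod.snd h)
    exact tupleEquiv_of_extension_classes (congrArg Prod.fst h) fun c =>
      ⟨fun hc => (hsnd ⟨c, hU hc⟩).1 hc, fun hc => (hsnd ⟨c, hU hc⟩).2 hc⟩
  let G (c : range (tupleClass L E γ : (S → M) → Set (S → M))) := F c.2.choose
  have hG : Function.Injective G := by
    rintro ⟨c, hc⟩ ⟨d, hd⟩ h
    refine Subtype.ext (show c = d from ?_)
    rw [← hc.choose_spec, ← hd.choose_spec]
    exact (hF h).tupleClass_eq
  calc #(range (tupleClass L E γ : (S → M) → Set (S → M)))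
      ≤ #(Set (L.Formula S) × Set U) := mk_le_of_injective hG
    _ ≤ 2 ^ θ * 2 ^ bethAt θ γ := by
      rw [mk_prod, lift_id, lift_id, mk_set, mk_set]
      exact mul_le_mul' (power_le_power_left two_ne_zero (mk_formula_le hθ hL hS))
        (power_le_power_left two_ne_zero hU)
    _ = bethAt θ (γ + 1) := by
      rw [← power_add, add_eq_right (hθ.trans (le_bethAt γ)) (le_bethAt γ), bethAt_add_one]

end Counting

section BackAndForth

variable {L : FirstOrder.Language.{u, u}} {S M N : Type u} [L.Structure M] [L.Structure N]
  {θ : Cardinal.{u}}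

theorem mem_BF_iff {γ : Ordinal.{u}} {g : Set (M × N)} :
    g ∈ BF L M N θ γ ↔ IsPartialIso L M N g ∧ #g ≤ θ ∧ ∀ γ' < γ,
      (∀ A : Set M, #A ≤ θ → ∃ g' ∈ BF L M N θ γ', g ⊆ g' ∧ A ⊆ Prod.fst '' g') ∧
      (∀ B : Set N, #B ≤ θ → ∃ g' ∈ BF L M N θ γ', g ⊆ g' ∧ B ⊆ Prod.snd '' g') := by
  rw [BF, WellFounded.fix_eq]
  rfl

theorem empty_mem_BF [IsEmpty M] [IsEmpty N] (γ : Ordinal.{u}) : ∅ ∈ BF L M N θ γ := by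
  induction γ using WellFoundedLT.induction with | _ γ IH => ?_
  refine mem_BF_iff.2 ⟨?_, by simp, fun γ' hγ' => ⟨fun A _ => ?_, fun B _ => ?_⟩⟩
  · refine ⟨by simp, by simp, fun n R x => isEmptyElim (x 0), by simp⟩
  · exact ⟨∅, IH γ' hγ', subset_rfl, by simp [eq_empty_of_isEmpty A]⟩
  · exact ⟨∅, IH γ' hγ', subset_rfl, by simp [eq_empty_of_isEmpty B]⟩

theorem exists_restrict_eq_and_range_eq (E : S ≃ S ⊕ S) (hS : ℵ₀ ≤ #S) (s : S → M) {A : Set M}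
    (hA : #A ≤ #S) : ∃ s', restrict E s' = s ∧ range s' = range s ∪ A := by
  have : Nonempty S := mk_ne_zero_iff.1 (aleph0_pos.trans_le hS).ne'
  have : Nonempty ↥(range s ∪ A) := ⟨⟨s (Classical.arbitrary S), Or.inl (mem_range_self _)⟩⟩
  obtain ⟨e⟩ : Nonempty (↥(range s ∪ A) ↪ S) :=
    le_def _ _ |>.1 <| (mk_union_le _ _).trans <|
      (add_le_add mk_range_le hA).trans (add_eq_self hS).le
  refine ⟨Sum.elim s (Subtype.val ∘ Function.invFun e) ∘ E, funext fun i => by simp [restrict], ?_⟩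
  rw [E.surjective.range_comp, Set.Sum.elim_range, range_comp,
    (Function.invFun_surjective e.injective).range_eq, image_univ, Subtype.range_coe,
    ← union_assoc, union_self]

variable {E : S ≃ S ⊕ S}

theorem range_prod_subset_of_restrict_eq {s s' : S → M} {t t' : S → N} (hs : restrict E s' = s)
    (ht : restrict E t' = t) : (range fun i => (s i, t i)) ⊆ range fun i => (s' i, t' i) := by
  rintro _ ⟨i, rfl⟩
  exact ⟨E.symm (Sum.inl i), by rw [← hs, ← ht]; rfl⟩

theorem TupleEquiv.range_mem_BF (hθ : ℵ₀ ≤ θ) (hS : #S = θ) {γ : Ordinal.{u}} {s : S → M}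
    {t : S → N} (h : TupleEquiv L E γ s t) : (range fun i => (s i, t i)) ∈ BF L M N θ γ := by
  induction γ using WellFoundedLT.induction generalizing s t with | _ γ IH => ?_
  subst hS
  refine mem_BF_iff.2 ⟨isPartialIso_range_of_qfType_eq h.qfType_eq, mk_range_le,
    fun γ' hγ' => ⟨fun A hA => ?_, fun B hB => ?_⟩⟩
  · obtain ⟨s', hs', hrange⟩ := exists_restrict_eq_and_range_eq E hθ s hA
    obtain ⟨t', ht', h'⟩ := h.forth hγ' hs'
    refine ⟨_, IH γ' hγ' h', range_prod_subset_of_restrict_eq hs' ht', ?_⟩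
    rw [← range_comp]
    exact hrange ▸ subset_union_right
  · obtain ⟨t', ht', hrange⟩ := exists_restrict_eq_and_range_eq E hθ t hB
    obtain ⟨s', hs', h'⟩ := h.back hγ' ht'
    refine ⟨_, IH γ' hγ' h', range_prod_subset_of_restrict_eq hs' ht', ?_⟩
    rw [← range_comp]
    exact hrange ▸ subset_union_right

/-- A Tarski–Vaught test for back-and-forth equivalence. -/
theorem tupleEquiv_embedding_comp (f : N ↪[L] M) {β : Ordinal.{u}}
    (hf : ∀ (u : S → N) (s : S → M), restrict E s = f ∘ u →
      ∃ u', restrict E u' = u ∧ TupleEquiv L E β s (f ∘ u'))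
    {γ : Ordinal.{u}} (hγ : γ ≤ β) (u : S → N) : TupleEquiv L E γ (f ∘ u) u := by
  induction γ using WellFoundedLT.induction generalizing u with | _ γ IH => ?_
  refine tupleEquiv_iff.2 ⟨qfType_embedding_comp f u, fun γ' hγ' => ⟨fun s' hs' => ?_,
    fun u' hu' => ⟨f ∘ u', by rw [← hu']; rfl, IH γ' hγ' (hγ'.le.trans hγ) u'⟩⟩⟩
  obtain ⟨u', hu', h⟩ := hf u s' hs'
  exact ⟨u', hu', (h.mono (hγ'.le.trans hγ)).trans (IH γ' hγ' (hγ'.le.trans hγ) u')⟩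

end BackAndForth

section Closure

variable {M : Type u} (θ : Cardinal.{u}) (W : Set M → Set M) (X₀ : Set M)

def closureStage (δ : Ordinal.{u}) : Set M :=
  X₀ ∪ ⋃ δ' < δ, ⋃ A : {A : Set M // A ⊆ closureStage δ' ∧ #A ≤ θ}, W A
termination_by δ

variable {θ W X₀}

theorem closureStage_eq (δ : Ordinal.{u}) : closureStage θ W X₀ δ =
    X₀ ∪ ⋃ δ' < δ, ⋃ A : {A : Set M // A ⊆ closureStage θ W X₀ δ' ∧ #A ≤ θ}, W A := by
  rw [closureStage]

theorem subset_closureStage_zero : X₀ ⊆ closureStage θ W X₀ 0 := by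
  rw [closureStage_eq]
  exact subset_union_left

theorem subset_closureStage_of_lt {δ' δ : Ordinal.{u}} (h : δ' < δ) {A : Set M}
    (hA : A ⊆ closureStage θ W X₀ δ') (hAθ : #A ≤ θ) : W A ⊆ closureStage θ W X₀ δ := by
  intro x hx
  rw [closureStage_eq δ]
  exact Or.inr (mem_iUnion₂.2 ⟨δ', h, mem_iUnion.2 ⟨⟨A, hA, hAθ⟩, hx⟩⟩)

theorem closureStage_mono : Monotone (closureStage θ W X₀) := by
  intro δ₁ δ₂ h
  rw [closureStage_eq δ₁, closureStage_eq δ₂]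
  refine union_subset_union_right _ (iUnion₂_subset fun δ' hδ' => ?_)
  exact subset_iUnion₂_of_subset (κ := fun δ' => δ' < δ₂) δ' (hδ'.trans_le h) subset_rfl

theorem mk_closureStage_le {κ : Cardinal.{u}} (hθκ : ℵ₀ ≤ κ) (hκ : κ ^ θ ≤ κ)
    (hW : ∀ A : Set M, #A ≤ θ → #(W A) ≤ κ) (hX₀ : #X₀ ≤ κ) {δ : Ordinal.{u}} (hδ : δ.card ≤ κ) :
    #(closureStage θ W X₀ δ) ≤ κ := by
  induction δ using WellFoundedLT.induction with | _ δ IH => ?_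
  rw [closureStage_eq]
  refine (mk_union_le _ _).trans ((add_le_add hX₀ ?_).trans (add_eq_self hθκ).le)
  refine mk_biUnion_le_of_le hδ hθκ _ fun δ' hδ' => (mk_iUnion_le _).trans ?_
  have hsub : #{A : Set M // A ⊆ closureStage θ W X₀ δ' ∧ #A ≤ θ} ≤ κ :=
    (mk_bounded_subset_le _ θ).trans <| (power_le_power_right
      (max_le (IH δ' hδ' ((Ordinal.card_le_card hδ'.le).trans hδ)) hθκ)).trans hκ
  exact (mul_le_mul' hsub (ciSup_le' fun (A : {A : Set M // _ ∧ _}) => hW A.1 A.2.2)).trans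
    (mul_eq_self hθκ).le

theorem exists_closed_superset {κ : Cardinal.{u}} (hθ : ℵ₀ ≤ θ) (hθκ : θ ≤ κ) (hκ : κ ^ θ ≤ κ)
    (hW : ∀ A : Set M, #A ≤ θ → #(W A) ≤ κ) (hX₀ : #X₀ ≤ κ) :
    ∃ X, X₀ ⊆ X ∧ #X ≤ κ ∧ ∀ A ⊆ X, #A ≤ θ → W A ⊆ X := by
  set T := (Order.succ θ).ord
  have hT : Order.IsSuccLimit T := isSuccLimit_ord (hθ.trans (Order.le_succ θ))
  have hsuccκ : Order.succ θ ≤ κ := Order.succ_le_of_lt <| (cantor θ).trans_le <|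
    (power_le_power_right ((natCast_lt_aleph0 (n := 2)).le.trans (hθ.trans hθκ))).trans hκ
  refine ⟨⋃ δ < T, closureStage θ W X₀ δ, ?_, ?_, fun A hA hAθ => ?_⟩
  · exact subset_closureStage_zero.trans
      (subset_biUnion_of_mem (u := closureStage θ W X₀) hT.bot_lt)
  · exact mk_biUnion_le_of_le (by rwa [card_ord]) (hθ.trans hθκ) _ fun δ hδ =>
      mk_closureStage_le (hθ.trans hθκ) hκ hW hX₀ ((lt_ord.1 hδ).le.trans hsuccκ)
  · have (a : A) : ∃ δ < T, (a : M) ∈ closureStage θ W X₀ δ := by simpa using hA a.2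
    choose δ hδT hδ using this
    have hsup : ⨆ a, δ a < T := Ordinal.iSup_lt_of_lt_cof
      (by rw [(isRegular_succ hθ).cof_ord]; exact Order.lt_succ_of_le hAθ) hδT
    refine (subset_closureStage_of_lt (Order.lt_add_one_iff.2 le_rfl) (fun a ha => ?_) hAθ).trans
      (subset_biUnion_of_mem (u := closureStage θ W X₀) (hT.add_one_lt hsup))
    exact closureStage_mono (Ordinal.le_iSup δ ⟨a, ha⟩) (hδ ⟨a, ha⟩)

end Closure

section Construction

variable {L : FirstOrder.Language.{u, u}} {S M : Type u} [L.Structure M] {E : S ≃ S ⊕ S}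
  {θ : Cardinal.{u}}

theorem mk_closure_le (hθ : ℵ₀ ≤ θ) (hL : L.card ≤ θ) {A : Set M} (hA : #A ≤ θ) :
    #(Substructure.closure L A) ≤ θ := by
  have hfun : #(Σ i, L.Functions i) ≤ θ := (mk_le_of_injective Sum.inl_injective).trans hL
  have := Substructure.lift_card_closure_le.{u, u} (L := L) (s := A)
  rw [lift_id, lift_id, lift_id] at this
  exact this.trans (max_le hθ ((add_le_add hA hfun).trans (add_eq_self hθ).le))

theorem bethAt_add_one_power_le (hθ : ℵ₀ ≤ θ) (o : Ordinal.{u}) :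
    bethAt θ (o + 1) ^ θ ≤ bethAt θ (o + 1) := by
  rw [bethAt_add_one, ← power_mul, mul_eq_left (hθ.trans (le_bethAt o)) (le_bethAt o) (by
    exact (aleph0_pos.trans_le hθ).ne')]

theorem exists_extension_witnesses (hθ : ℵ₀ ≤ θ) (hL : L.card ≤ θ) (hS : #S ≤ θ)
    (β : Ordinal.{u}) (t : S → M) :
    ∃ W : Set M, #W ≤ bethAt θ (β + 1) ∧ ∀ t'', restrict E t'' = t →
      ∃ t', restrict E t' = t ∧ range t' ⊆ W ∧ TupleEquiv L E β t'' t' := by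
  have (c : range (tupleClass L E β : (S → M) → Set (S → M))) : ∃ t' : S → M,
      (∃ t'', restrict E t'' = t ∧ tupleClass L E β t'' = c) →
        restrict E t' = t ∧ tupleClass L E β t' = c := by
    by_cases h : ∃ t'', restrict E t'' = t ∧ tupleClass L E β t'' = c
    · exact ⟨h.choose, fun _ => h.choose_spec⟩
    · exact ⟨t, fun h' => absurd h' h⟩
  choose pick hpick using this
  refine ⟨⋃ c, range (pick c), ?_, fun t'' ht'' => ?_⟩
  · have hB := hθ.trans (le_bethAt (θ := θ) (β + 1))
    refine (mk_iUnion_le _).trans ((mul_le_mul' (mk_range_tupleClass_le hθ hL hS β)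
      (ciSup_le' fun c => mk_range_le.trans (hS.trans (le_bethAt _)))).trans (mul_eq_self hB).le)
  · set c : range (tupleClass L E β : (S → M) → Set (S → M)) := ⟨_, mem_range_self t''⟩
    obtain ⟨hrestrict, hclass⟩ := hpick c ⟨t'', ht'', rfl⟩
    have hclass : tupleClass L E β (pick c) = tupleClass L E β t'' := hclass
    have : pick c ∈ tupleClass L E β t'' := hclass ▸ TupleEquiv.refl β (pick c)
    exact ⟨pick c, hrestrict, subset_iUnion_of_subset c subset_rfl, this⟩

theorem exists_substructure_extension_closed (hθ : ℵ₀ ≤ θ) (hL : L.card ≤ θ) (hS : #S ≤ θ)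
    (β : Ordinal.{u}) (m : M) :
    ∃ N : L.Substructure M, m ∈ N ∧ #N ≤ bethAt θ (β + 1) ∧
      ∀ (u : S → N) (s : S → M), restrict E s = N.subtype ∘ u →
        ∃ u', restrict E u' = u ∧ TupleEquiv L E β s (N.subtype ∘ u') := by
  choose wit hwit_card hwit using exists_extension_witnesses (M := M) (E := E) hθ hL hS β
  set κ := bethAt θ (β + 1)
  have hθκ : θ ≤ κ := le_bethAt _
  have hκ₀ : ℵ₀ ≤ κ := hθ.trans hθκ
  have hκ : κ ^ θ ≤ κ := bethAt_add_one_power_le hθ β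
  let W (A : Set M) : Set M := Substructure.closure L A ∪ ⋃ t : S → A, wit (Subtype.val ∘ t)
  have hW (A : Set M) (hA : #A ≤ θ) : #(W A) ≤ κ := by
    have htuples : #(S → A) ≤ κ := by
      rw [← power_def]
      exact ((power_le_power_right (hA.trans hθκ)).trans (power_le_power_left
        (aleph0_pos.trans_le hκ₀).ne' hS)).trans hκ
    refine (mk_union_le _ _).trans
      ((add_le_add ((mk_closure_le hθ hL hA).trans hθκ) ?_).trans (add_eq_self hκ₀).le)
    exact (mk_iUnion_le _).trans ((mul_le_mul' htuples (ciSup_le' fun t => hwit_card _)).trans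
      (mul_eq_self hκ₀).le)
  obtain ⟨X, hmX, hXκ, hXW⟩ := exists_closed_superset hθ hθκ hκ hW (X₀ := {m})
    (by simpa using one_le_aleph0.trans hκ₀)
  refine ⟨⟨X, fun {n} f x hx => ?_⟩, hmX rfl, hXκ, fun u s hs => ?_⟩
  · refine hXW (range x) (range_subset_iff.2 hx) ((finite_range x).lt_aleph0.le.trans hθ)
      (Or.inl (Substructure.fun_mem _ f x fun i => Substructure.subset_closure (mem_range_self i)))
  · obtain ⟨t', ht', hrange, h⟩ := hwit _ s hs
    have hX : range t' ⊆ X := hrange.trans <| (subset_union_of_subset_right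
      (subset_iUnion_of_subset (rangeFactorization fun i => (u i : M)) subset_rfl) _).trans
        (hXW _ (range_subset_iff.2 fun i => (u i).2) (mk_range_le.trans hS))
    exact ⟨fun i => ⟨t' i, hX (mem_range_self i)⟩, funext fun i => Subtype.ext (congrFun ht' i), h⟩

end Construction

end DGPaper

open DGPaper in
/-- Karp.  Let `θ` be an infinite cardinal, `β` an ordinal, and `M` a
structure in a vocabulary of cardinality `≤ θ`.  Then there is a substructure `N` of `M`
of cardinality at most `ℶ_{β+1}(θ)` such that `M ≡^β_θ N`. -/
theorem karp_small_substructure (L : FirstOrder.Language.{u, u})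
    (M : Type u) [L.Structure M]
    (θ : Cardinal.{u}) (hθ : Cardinal.aleph0 ≤ θ) (hL : L.card ≤ θ)
    (β : Ordinal.{u}) :
    ∃ S : L.Substructure M, #S ≤ bethAt θ (β + 1) ∧ BFEquiv L M (↥S) θ β := by
  rcases isEmpty_or_nonempty M with _ | ⟨⟨m⟩⟩
  · exact ⟨⊥, by simp, ∅, empty_mem_BF β⟩
  have hS : #θ.out = θ := mk_out θ
  obtain ⟨E⟩ : Nonempty (θ.out ≃ θ.out ⊕ θ.out) := Cardinal.eq.1 (by simp [hS, add_eq_self hθ])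
  obtain ⟨N, hm, hN, hext⟩ := exists_substructure_extension_closed (E := E) hθ hL hS.le β m
  have hequiv := tupleEquiv_embedding_comp N.subtype hext le_rfl fun _ => ⟨m, hm⟩
  exact ⟨N, hN, _, hequiv.range_mem_BF hθ hS⟩
end
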